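/- Let x₁ < x₂ be real numbers with ζ = x₂ − x₁ > 0, and let α, m > 0. Then ∫_ℝ |x − x₁|^m e^{−α(x−x₁)₊} e^{−α(x₂−x)₊} dx ≤ C(α, m) (1 + ζ^{m+1}) e^{−αζ}, where C(α,m) depends only on α and m. -/

import Mathlib

/-!
Write ζ = x₂ - x₁. The two exponentials multiply to e^{-αζ} e^{-α d(x)}, where d(x) is the
distance from x to [x₁, x₂]. So the integrand is at most e^{-αζ} ζ^m on [x₁, x₂], and outside
it is e^{-αζ} times a weight (1 + |s|^m) e^{-α|s|} centred at x₁ or x₂, up to the factor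
2^m (1 + ζ^m) coming from |x - x₁|^m ≤ 2^m (ζ^m + |x - x₂|^m) to the right of x₂. Integrating,
the middle interval contributes ζ^{m+1} e^{-αζ} and the tails O((1 + ζ^m) e^{-αζ}), and
ζ^m ≤ 1 + ζ^{m+1}.
-/

open MeasureTheory Set Real

lemma integrable_comp_abs_of_integrableOn_Ioi {f : ℝ → ℝ} (hf : IntegrableOn f (Ioi 0)) :
    Integrable (fun x => f |x|) := by
  have hIoi : IntegrableOn (fun x => f |x|) (Ioi 0) :=
    hf.congr_fun (fun x hx => by rw [abs_of_pos hx]) measurableSet_Ioi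
  have hIic : IntegrableOn (fun x => f |x|) (Iic 0) := by
    rw [← Measure.map_neg_eq_self (volume : Measure ℝ),
      measurableEmbedding_neg.integrableOn_map_iff]
    simp only [Function.comp_def, abs_neg, neg_preimage, neg_Iic, neg_zero]
    exact (integrableOn_Ici_iff_integrableOn_Ioi (b := 0)).mpr hIoi
  rw [← integrableOn_univ, ← Iic_union_Ioi (a := 0)]
  exact hIic.union hIoi

lemma rpow_add_le_two_rpow_mul_add_rpow {a b m : ℝ} (ha : 0 ≤ a) (hb : 0 ≤ b) (hm : 0 ≤ m) :
    (a + b) ^ m ≤ 2 ^ m * (a ^ m + b ^ m) := by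
  wlog hab : b ≤ a generalizing a b
  · simpa only [add_comm] using this hb ha (le_of_not_ge hab)
  calc (a + b) ^ m ≤ (2 * a) ^ m := by gcongr; linarith
    _ = 2 ^ m * a ^ m := mul_rpow zero_le_two ha
    _ ≤ 2 ^ m * (a ^ m + b ^ m) := by gcongr; exact le_add_of_nonneg_right (by positivity)

lemma add_rpow_le_two_rpow_mul_one_add_rpow_mul {a b m : ℝ} (ha : 0 ≤ a) (hb : 0 ≤ b)
    (hm : 0 ≤ m) : (a + b) ^ m ≤ 2 ^ m * (1 + a ^ m) * (1 + b ^ m) := by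
  refine (rpow_add_le_two_rpow_mul_add_rpow ha hb hm).trans ?_
  rw [mul_assoc]
  gcongr
  nlinarith [mul_nonneg (rpow_nonneg ha m) (rpow_nonneg hb m)]

lemma rpow_le_one_add_rpow_add_one {x m : ℝ} (hx : 0 ≤ x) (hm : 0 ≤ m) :
    x ^ m ≤ 1 + x ^ (m + 1) := by
  rcases le_total x 1 with h | h
  · linarith [rpow_le_one hx h hm, rpow_nonneg hx (m + 1)]
  · linarith [rpow_le_rpow_of_exponent_le h (by linarith : m ≤ m + 1)]

noncomputable def polyExpWeight (α m s : ℝ) : ℝ := (1 + |s| ^ m) * exp (-α * |s|)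

lemma integrable_polyExpWeight {α m : ℝ} (hα : 0 < α) (hm : -1 < m) :
    Integrable (polyExpWeight α m) := by
  have hpow : IntegrableOn (fun s : ℝ => s ^ m * exp (-α * s)) (Ioi 0) := by
    simpa using integrableOn_rpow_mul_exp_neg_mul_rpow hm zero_lt_one hα
  have h := (exp_neg_integrableOn_Ioi 0 hα).add hpow
  refine integrable_comp_abs_of_integrableOn_Ioi (f := fun s => (1 + s ^ m) * exp (-α * s))
    (h.congr_fun (fun s _ => ?_) measurableSet_Ioi)
  simp only [Pi.add_apply]; ring

lemma polyExpWeight_nonneg (α m s : ℝ) : 0 ≤ polyExpWeight α m s := by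
  unfold polyExpWeight; positivity

lemma integrable_indicator_Icc_const (a b c : ℝ) : Integrable ((Icc a b).indicator fun _ => c) :=
  (integrableOn_const measure_Icc_lt_top.ne).integrable_indicator measurableSet_Icc

noncomputable def integrandMajorant (α m x₁ x₂ x : ℝ) : ℝ :=
  exp (-α * (x₂ - x₁)) * ((Icc x₁ x₂).indicator (fun _ => (x₂ - x₁) ^ m) x +
    2 ^ m * (1 + (x₂ - x₁) ^ m) * (polyExpWeight α m (x - x₁) + polyExpWeight α m (x - x₂)))

lemma integrand_le_integrandMajorant {α m x₁ x₂ : ℝ} (hm : 0 ≤ m) (h : x₁ ≤ x₂) (x : ℝ) :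
    |x - x₁| ^ m * exp (-α * max (x - x₁) 0) * exp (-α * max (x₂ - x) 0) ≤
      integrandMajorant α m x₁ x₂ x := by
  have hζ : 0 ≤ x₂ - x₁ := sub_nonneg.mpr h
  have hP : 1 ≤ 2 ^ m * (1 + (x₂ - x₁) ^ m) :=
    one_le_mul_of_one_le_of_one_le (one_le_rpow one_le_two hm)
      (le_add_of_nonneg_right (rpow_nonneg hζ m))
  have hW₁ := polyExpWeight_nonneg α m (x - x₁)
  have hW₂ := polyExpWeight_nonneg α m (x - x₂)
  have hind : 0 ≤ (Icc x₁ x₂).indicator (fun _ => (x₂ - x₁) ^ m) x :=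
    indicator_nonneg (fun _ _ => rpow_nonneg hζ m) x
  unfold integrandMajorant polyExpWeight at *
  rcases lt_or_ge x x₁ with hx | hx
  · have hd : |x - x₁| = x₁ - x := by rw [abs_of_neg (by linarith)]; ring
    calc _ = exp (-α * (x₂ - x₁)) * (|x - x₁| ^ m * exp (-α * |x - x₁|)) := by
          rw [max_eq_right (by linarith), max_eq_left (by linarith), mul_zero, exp_zero, mul_one,
            mul_left_comm, ← exp_add, hd]
          ring_nf
      _ ≤ _ := by
          refine mul_le_mul_of_nonneg_left ?_ (exp_pos _).le
          nlinarith [mul_nonneg (sub_nonneg.mpr hP) hW₁, exp_pos (-α * |x - x₁|)]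
  rcases le_or_gt x x₂ with hx' | hx'
  · have hd : |x - x₁| = x - x₁ := abs_of_nonneg (by linarith)
    calc _ = exp (-α * (x₂ - x₁)) * (x - x₁) ^ m := by
          rw [max_eq_left (by linarith), max_eq_left (by linarith), hd, mul_assoc, ← exp_add]
          ring_nf
      _ ≤ _ := by
          refine mul_le_mul_of_nonneg_left ?_ (exp_pos _).le
          rw [indicator_of_mem (mem_Icc.mpr ⟨hx, hx'⟩)]
          have := rpow_le_rpow (by linarith) (by linarith : x - x₁ ≤ x₂ - x₁) hm
          nlinarith [mul_nonneg (zero_le_one.trans hP) (add_nonneg hW₁ hW₂)]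
  · have hd : |x - x₁| = (x₂ - x₁) + |x - x₂| := by
      rw [abs_of_pos (by linarith), abs_of_pos (by linarith)]; ring
    have hpow : |x - x₁| ^ m ≤ 2 ^ m * (1 + (x₂ - x₁) ^ m) * (1 + |x - x₂| ^ m) := by
      rw [hd]; exact add_rpow_le_two_rpow_mul_one_add_rpow_mul hζ (abs_nonneg _) hm
    calc _ = exp (-α * (x₂ - x₁)) * (|x - x₁| ^ m * exp (-α * |x - x₂|)) := by
          rw [max_eq_left (by linarith), max_eq_right (by linarith), mul_zero, exp_zero, mul_one,
            mul_left_comm, ← exp_add, abs_of_pos (by linarith : 0 < x - x₂)]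
          ring_nf
      _ ≤ _ := by
          refine mul_le_mul_of_nonneg_left ?_ (exp_pos _).le
          nlinarith [mul_le_mul_of_nonneg_right hpow (exp_pos (-α * |x - x₂|)).le,
            mul_nonneg (zero_le_one.trans hP) hW₁]

section Majorant

variable {α m : ℝ} (hα : 0 < α) (hm : -1 < m) (x₁ x₂ : ℝ)
include hα hm

lemma integrable_polyExpWeight_sub_add_sub :
    Integrable (fun x => polyExpWeight α m (x - x₁) + polyExpWeight α m (x - x₂)) :=
  ((integrable_polyExpWeight hα hm).comp_sub_right x₁).add
    ((integrable_polyExpWeight hα hm).comp_sub_right x₂)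

lemma integrable_integrandMajorant : Integrable (integrandMajorant α m x₁ x₂) :=
  ((integrable_indicator_Icc_const x₁ x₂ _).add
    ((integrable_polyExpWeight_sub_add_sub hα hm x₁ x₂).const_mul _)).const_mul _

lemma integral_integrandMajorant (h : x₁ ≤ x₂) :
    ∫ x, integrandMajorant α m x₁ x₂ x = exp (-α * (x₂ - x₁)) *
      ((x₂ - x₁) ^ m * (x₂ - x₁) +
        2 ^ m * (1 + (x₂ - x₁) ^ m) * (2 * ∫ s, polyExpWeight α m s)) := by
  have hw := integrable_polyExpWeight hα hm
  unfold integrandMajorant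
  rw [integral_const_mul, integral_add (integrable_indicator_Icc_const x₁ x₂ _)
      ((integrable_polyExpWeight_sub_add_sub hα hm x₁ x₂).const_mul _), integral_const_mul,
    integral_add (hw.comp_sub_right x₁) (hw.comp_sub_right x₂),
    integral_sub_right_eq_self (polyExpWeight α m), integral_sub_right_eq_self (polyExpWeight α m),
    integral_indicator_const _ measurableSet_Icc, Real.volume_real_Icc,
    max_eq_left (sub_nonneg.mpr h), smul_eq_mul, two_mul, mul_comm ((x₂ - x₁) ^ m)]

end Majorant

theorem stmt2 (α m : ℝ) (hα : 0 < α) (hm : 0 < m) :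
    ∃ C : ℝ, 0 < C ∧ ∀ x₁ x₂ : ℝ, x₁ < x₂ →
      (∫ x : ℝ, |x - x₁| ^ m * Real.exp (-α * max (x - x₁) 0) *
          Real.exp (-α * max (x₂ - x) 0)) ≤
        C * (1 + (x₂ - x₁) ^ (m + 1)) * Real.exp (-α * (x₂ - x₁)) := by
  have hW : 0 ≤ ∫ s, polyExpWeight α m s := integral_nonneg (polyExpWeight_nonneg α m)
  have hm' : -1 < m := by linarith
  refine ⟨1 + 2 ^ (m + 2) * ∫ s, polyExpWeight α m s, by positivity, fun x₁ x₂ hx => ?_⟩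
  have hζ : 0 < x₂ - x₁ := sub_pos.mpr hx
  have hζm := rpow_le_one_add_rpow_add_one hζ.le hm.le
  calc _ ≤ ∫ x, integrandMajorant α m x₁ x₂ x :=
        integral_mono_of_nonneg (ae_of_all _ fun x => by positivity)
          (integrable_integrandMajorant hα hm' x₁ x₂)
          (ae_of_all _ (integrand_le_integrandMajorant hm.le hx.le))
    _ = _ := integral_integrandMajorant hα hm' x₁ x₂ hx.le
    _ ≤ _ := by
      rw [← rpow_add_one hζ.ne', rpow_add two_pos, rpow_two, mul_comm _ (exp _)]
      gcongr
      have hPW := mul_nonneg (rpow_nonneg zero_le_two m) hW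
      nlinarith [mul_le_mul_of_nonneg_left hζm hPW, mul_nonneg hPW (rpow_nonneg hζ.le (m + 1))]
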